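/- arXiv:1909.03535 — 5 statements merged into one kernel-verified Lean document; each statement's English description precedes it below -/
import Mathlib

section
/- Fix a prime p. For every n ≥ 1 and every nontrivial element g of the p-lamplighter group L whose word length with respect to X = {s₀, t} is at most n, there exists a normal subgroup N of L of finite index at most 4p²(n+1)² with g ∉ N. In particular the residual finiteness growth of L is dominated by n². -/
open LaurentPolynomial Pointwise

noncomputable def lampAut (p : ℕ) (z : ℤ) : AddAut (LaurentPolynomial (ZMod p)) where
  toFun f := T z * f
  invFun f := T (-z) * f
  left_inv f := by
    show T (-z) * (T z * f) = f
    rw [← mul_assoc, ← T_add]; simp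
  right_inv f := by
    show T z * (T (-z) * f) = f
    rw [← mul_assoc, ← T_add]; simp
  map_add' f g := mul_add _ _ _

/-- The action of `ℤ` on (the multiplicative version of) `𝔽_p[t,t⁻¹]` by `f(t) ↦ t^z·f(t)`. -/
noncomputable def lampAction (p : ℕ) :
    Multiplicative ℤ →* MulAut (Multiplicative (LaurentPolynomial (ZMod p))) where
  toFun z := AddEquiv.toMultiplicative (lampAut p z.toAdd)
  map_one' := by
    refine MulEquiv.ext fun f => ?_
    show Multiplicative.ofAdd (T ((1 : Multiplicative ℤ).toAdd) * f.toAdd) = f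
    simp
  map_mul' x y := by
    refine MulEquiv.ext fun f => ?_
    show Multiplicative.ofAdd (T ((x * y).toAdd) * f.toAdd)
      = Multiplicative.ofAdd (T x.toAdd * (T y.toAdd * f.toAdd))
    rw [← mul_assoc, ← T_add]
    rfl

/-- The `p`-lamplighter group `L = 𝔽_p[t,t⁻¹] ⋊ ℤ`. -/
noncomputable abbrev Lamplighter (p : ℕ) :=
  SemidirectProduct (Multiplicative (LaurentPolynomial (ZMod p))) (Multiplicative ℤ) (lampAction p)

/-- The element `(f(t), n)` of the lamplighter group. -/
noncomputable def lampMk (p : ℕ) (f : LaurentPolynomial (ZMod p)) (n : ℤ) : Lamplighter p :=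
  ⟨Multiplicative.ofAdd f, Multiplicative.ofAdd n⟩

/-- The generator `s₀ = (1, 0)`. -/
noncomputable def lampS (p : ℕ) : Lamplighter p := lampMk p 1 0

/-- The generator `t = (0, 1)`. -/
noncomputable def lampT (p : ℕ) : Lamplighter p := lampMk p 0 1

/-- The set `{1, s₀, s₀⁻¹, t, t⁻¹}`; membership of `g` in its `n`-th pointwise power
says exactly that `g` is a product of at most `n` elements of `{s₀, s₀⁻¹, t, t⁻¹}`,
i.e. that `g` has word length at most `n` with respect to `X = {s₀, t}`. -/
noncomputable def lampGen (p : ℕ) : Set (Lamplighter p) :=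
  {1, lampS p, (lampS p)⁻¹, lampT p, (lampT p)⁻¹}



section LampAux

variable (p : ℕ) {F : Type} [Field F] [Algebra (ZMod p) F]

/-- Evaluation of a Laurent polynomial at a unit `α` of a field `F`, as an additive hom. -/
noncomputable def lampEv (α : Fˣ) : LaurentPolynomial (ZMod p) →+ F :=
  (Finsupp.liftAddHom fun i =>
    (AddMonoidHom.mulRight ((α ^ i : Fˣ) : F)).comp (algebraMap (ZMod p) F).toAddMonoidHom).comp
      AddMonoidAlgebra.coeffAddEquiv.toAddMonoidHom

lemma lampEv_single (α : Fˣ) (i : ℤ) (a : ZMod p) :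
    lampEv p α (AddMonoidAlgebra.single i a) = algebraMap (ZMod p) F a * ((α ^ i : Fˣ) : F) :=
  Finsupp.liftAddHom_apply_single _ i a

lemma lampEv_apply (α : Fˣ) (f : LaurentPolynomial (ZMod p)) :
    lampEv p α f = ∑ i ∈ f.coeff.support, algebraMap (ZMod p) F (f.coeff i) * ((α ^ i : Fˣ) : F) := rfl

lemma lampEv_T_mul (α : Fˣ) (m : ℤ) (f : LaurentPolynomial (ZMod p)) :
    lampEv p α (T m * f) = ((α ^ m : Fˣ) : F) * lampEv p α f := by
  induction f using AddMonoidAlgebra.induction_linear with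
  | zero => rw [mul_zero, map_zero, mul_zero]
  | add f g hf hg => rw [mul_add, map_add, hf, hg, map_add, mul_add]
  | single i a =>
      rw [T, AddMonoidAlgebra.single_mul_single, one_mul, lampEv_single, lampEv_single,
        zpow_add, Units.val_mul]
      ring

/-- Translations of `F`, as a hom from the additive group of Laurent polynomials. -/
noncomputable def lampTrans (α : Fˣ) :
    Multiplicative (LaurentPolynomial (ZMod p)) →* Equiv.Perm F where
  toFun f := Equiv.addLeft (lampEv p α f.toAdd)
  map_one' := by ext x; simp
  map_mul' f g := by
    ext x
    simp [Equiv.Perm.mul_apply, add_assoc]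

/-- Scaling of `F` by powers of `α`, as a hom from `Multiplicative ℤ`. -/
noncomputable def lampScale (α : Fˣ) : Multiplicative ℤ →* Equiv.Perm F where
  toFun := fun m => Equiv.mulLeft₀ ((α ^ m.toAdd : Fˣ) : F) (Units.ne_zero _)
  map_one' := by ext x; simp
  map_mul' a b := by
    ext x
    simp [Equiv.Perm.mul_apply, zpow_add, mul_assoc]

/-- The affine-action homomorphism `L →* Perm F`, `(f, m) ↦ (x ↦ f(α) + α^m x)`. -/
noncomputable def lampPermHom (α : Fˣ) : Lamplighter p →* Equiv.Perm F :=
  SemidirectProduct.lift (lampTrans p α) (lampScale (F := F) α) (by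
    intro m
    refine MonoidHom.ext fun f => Equiv.ext fun x => ?_
    show ((lampTrans p α) ((lampAction p m) f)) x
      = ((lampScale (F := F) α m) * (lampTrans p α f) * (lampScale (F := F) α m)⁻¹) x
    have h1 : (lampAction p m f).toAdd = T m.toAdd * f.toAdd := rfl
    simp only [lampTrans, lampScale, MonoidHom.coe_mk, OneHom.coe_mk, h1, lampEv_T_mul,
      Equiv.Perm.mul_apply]
    simp only [Equiv.coe_addLeft, Equiv.Perm.inv_def, Equiv.mulLeft₀_symm_apply,
      Equiv.mulLeft₀_apply, Units.val_zpow_eq_zpow_val]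
    rw [mul_add, mul_inv_cancel_left₀ (zpow_ne_zero _ (Units.ne_zero α))])

lemma lampPermHom_apply (α : Fˣ) (g : Lamplighter p) (x : F) :
    lampPermHom p α g x = lampEv p α g.left.toAdd + ((α ^ g.right.toAdd : Fˣ) : F) * x := by
  show ((lampTrans p α g.left) * (lampScale (F := F) α g.right)) x = _
  simp [lampTrans, lampScale, Equiv.Perm.mul_apply]

lemma lampPermHom_affine (α : Fˣ) (σ : Equiv.Perm F)
    (hσ : σ ∈ (lampPermHom p α).range) (x : F) :
    σ x = σ 0 + (σ 1 - σ 0) * x := by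
  obtain ⟨g, rfl⟩ := hσ
  rw [lampPermHom_apply, lampPermHom_apply, lampPermHom_apply]
  ring

lemma lampPermHom_card_range_le [Finite F] (α : Fˣ) :
    Nat.card (lampPermHom p α).range ≤ Nat.card F * Nat.card F := by
  rw [← Nat.card_prod]
  refine Nat.card_le_card_of_injective
    (fun σ => ((σ : Equiv.Perm F) 0, (σ : Equiv.Perm F) 1)) ?_
  rintro ⟨σ, hσ⟩ ⟨τ, hτ⟩ h
  simp only [Prod.mk.injEq] at h
  ext x
  rw [lampPermHom_affine p α σ hσ x, lampPermHom_affine p α τ hτ x, h.1, h.2]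

lemma lampGen_pow_bound {p : ℕ} {n : ℕ} {g : Lamplighter p} (hg : g ∈ lampGen p ^ n) :
    |g.right.toAdd| ≤ (n : ℤ) ∧ ∀ i ∈ g.left.toAdd.coeff.support, |i| ≤ (n : ℤ) := by
  induction n generalizing g with
  | zero =>
      rw [pow_zero, Set.mem_one] at hg
      subst hg
      exact ⟨by simp, by simp [show ((1 : Lamplighter p).left.toAdd) = 0 from rfl]⟩
  | succ n ih =>
      rw [pow_succ] at hg
      obtain ⟨a, ha, b, hb, rfl⟩ := hg
      obtain ⟨h1, h2⟩ := ih ha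
      have hrt : (a * b).right.toAdd = a.right.toAdd + b.right.toAdd := rfl
      have hlf : (a * b).left.toAdd = a.left.toAdd + T a.right.toAdd * b.left.toAdd := rfl
      have hsb : ∀ c : ZMod p, ∀ i ∈ (T (R := ZMod p) a.right.toAdd * (AddMonoidAlgebra.single (0 : ℤ) c : LaurentPolynomial (ZMod p))).coeff.support,
          |i| ≤ (n : ℤ) + 1 := by
        intro c i hi
        rw [T, AddMonoidAlgebra.single_mul_single, one_mul, add_zero] at hi
        have := Finsupp.support_single_subset hi
        rw [Finset.mem_singleton] at this
        subst this
        exact le_trans h1 (by omega)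
      have key : ∀ (c : ZMod p) (z : ℤ), b = lampMk p (AddMonoidAlgebra.single 0 c) z → |z| ≤ 1 →
          |(a * b).right.toAdd| ≤ ((n + 1 : ℕ) : ℤ) ∧
            ∀ i ∈ (a * b).left.toAdd.coeff.support, |i| ≤ ((n + 1 : ℕ) : ℤ) := by
        intro c z hbc hz
        constructor
        · rw [hrt, hbc]
          have : (lampMk p (AddMonoidAlgebra.single 0 c) z).right.toAdd = z := rfl
          rw [this]
          push_cast
          calc |a.right.toAdd + z| ≤ |a.right.toAdd| + |z| := abs_add_le _ _
            _ ≤ (n : ℤ) + 1 := add_le_add h1 hz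
        · intro i hi
          rw [hlf, hbc] at hi
          have hbl : (lampMk p (AddMonoidAlgebra.single 0 c) z).left.toAdd = AddMonoidAlgebra.single 0 c := rfl
          rw [hbl] at hi
          have := Finsupp.support_add hi
          push_cast
          rcases Finset.mem_union.1 this with h | h
          · exact le_trans (h2 i h) (by omega)
          · exact hsb c i h
      rcases hb with hb | hb | hb | hb | hb
      · refine key 0 0 ?_ (by norm_num)
        rw [hb]
        ext <;> simp [lampMk]
      · exact key 1 0 (by rw [hb]; rfl) (by norm_num)
      · refine key (-1) 0 ?_ (by norm_num)
        rw [hb]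
        ext
        · erw [SemidirectProduct.inv_left]; simp [lampS, lampMk, lampAction, lampAut]
        · erw [SemidirectProduct.inv_right]
      · exact key 0 1 (by rw [hb]; simp [lampT, lampMk]) (by norm_num)
      · refine key 0 (-1) ?_ (by norm_num)
        rw [hb]
        ext
        · erw [SemidirectProduct.inv_left]; simp [lampT, lampMk, lampAction, lampAut]
        · erw [SemidirectProduct.inv_right]

/-- Existence of a unit where a nonzero Laurent polynomial of bounded support doesn't vanish. -/
lemma lamp_exists_unit [Fact p.Prime] [Fintype F] (n : ℕ) (hcard : 2 * n + 1 < Fintype.card F)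
    (f : LaurentPolynomial (ZMod p)) (hf : f ≠ 0)
    (hsupp : ∀ i ∈ f.coeff.support, |i| ≤ (n : ℤ)) :
    ∃ α : Fˣ, lampEv p α f ≠ 0 := by
  classical
  set P : Polynomial F :=
    ∑ i ∈ f.coeff.support, Polynomial.C (algebraMap (ZMod p) F (f.coeff i)) * Polynomial.X ^ (i + n).toNat
    with hP
  have halg : Function.Injective (algebraMap (ZMod p) F) := (algebraMap (ZMod p) F).injective
  obtain ⟨i₀, hi₀⟩ := Finsupp.support_nonempty_iff.mpr (AddMonoidAlgebra.coeff_eq_zero.not.mpr hf)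
  have htoNat : ∀ i ∈ f.coeff.support, ((i + n).toNat : ℤ) = i + n := by
    intro i hi
    have := abs_le.1 (hsupp i hi)
    omega
  have hcoeff : P.coeff ((i₀ + n).toNat) = algebraMap (ZMod p) F (f.coeff i₀) := by
    rw [hP, Polynomial.finset_sum_coeff]
    rw [Finset.sum_eq_single_of_mem i₀ hi₀]
    · simp
    · intro i hi hne
      rw [Polynomial.coeff_C_mul, Polynomial.coeff_X_pow, if_neg, mul_zero]
      intro hEq
      have e1 := htoNat i hi
      have e2 := htoNat i₀ hi₀
      omega
  have hP0 : P ≠ 0 := by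
    intro h
    rw [h, Polynomial.coeff_zero] at hcoeff
    exact (Finsupp.mem_support_iff.1 hi₀) (halg (by rw [← hcoeff, map_zero]))
  have hdeg : P.natDegree ≤ 2 * n := by
    refine Polynomial.natDegree_sum_le_of_forall_le _ _ fun i hi => ?_
    refine le_trans (Polynomial.natDegree_C_mul_X_pow_le _ _) ?_
    have := abs_le.1 (hsupp i hi)
    omega
  -- find a nonzero non-root
  have hroots : P.roots.toFinset.card ≤ 2 * n :=
    le_trans (Multiset.toFinset_card_le _) (le_trans (Polynomial.card_roots' P) hdeg)
  have : ¬ (Finset.univ.erase (0 : F) ⊆ P.roots.toFinset) := by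
    intro hsub
    have := Finset.card_le_card hsub
    rw [Finset.card_erase_of_mem (Finset.mem_univ 0), Finset.card_univ] at this
    omega
  obtain ⟨a, ha, hanr⟩ := Finset.not_subset.1 this
  have ha0 : a ≠ 0 := (Finset.mem_erase.1 ha).1
  have heval : P.eval a ≠ 0 := by
    intro h
    exact hanr (Multiset.mem_toFinset.2 ((Polynomial.mem_roots hP0).2 h))
  refine ⟨Units.mk0 a ha0, fun hev => ?_⟩
  apply heval
  have hEq : P.eval a = ((Units.mk0 a ha0 ^ (n : ℤ) : Fˣ) : F) * lampEv p (Units.mk0 a ha0) f := by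
    rw [lampEv_apply, Finset.mul_sum, hP, Polynomial.eval_finset_sum]
    refine Finset.sum_congr rfl fun i hi => ?_
    have h1 := abs_le.1 (hsupp i hi)
    rw [Polynomial.eval_mul, Polynomial.eval_C, Polynomial.eval_pow, Polynomial.eval_X]
    have hpow : ((Units.mk0 a ha0 ^ (n : ℤ) : Fˣ) : F) * ((Units.mk0 a ha0 ^ i : Fˣ) : F)
        = a ^ ((i + n).toNat) := by
      rw [← Units.val_mul, ← zpow_add,
        show (n : ℤ) + i = (((i + n).toNat : ℕ) : ℤ) by omega, zpow_natCast]
      simp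
    rw [mul_left_comm, hpow]
  rw [hEq, hev, mul_zero]

end LampAux

/-- **Upper bound (quantified residual finiteness).** For every `n ≥ 1` and every nontrivial
element `g` of the `p`-lamplighter group `L` of word length at most `n` with respect to
`X = {s₀, t}`, there is a finite-index normal subgroup `N` of `L` of index at most
`4p²(n+1)²` with `g ∉ N`.  In particular `RF_L(n) ⪯ n²`. -/
theorem lamplighter_residual_finiteness_upper_bound (p : ℕ) (hp : p.Prime) :
    ∀ n : ℕ, 1 ≤ n → ∀ g : Lamplighter p, g ≠ 1 → g ∈ lampGen p ^ n →
      ∃ N : Subgroup (Lamplighter p), N.Normal ∧ g ∉ N ∧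
        0 < N.index ∧ N.index ≤ 4 * p ^ 2 * (n + 1) ^ 2 := by
  haveI := Fact.mk hp
  intro n hn g hg1 hgpow
  obtain ⟨hright, hleft⟩ := lampGen_pow_bound hgpow
  by_cases hm : g.right.toAdd = 0
  · -- the lamp configuration is nontrivial; separate using the affine action on a finite field
    have hf : g.left.toAdd ≠ 0 := by
      intro h0
      apply hg1
      have hgmk : g = lampMk p g.left.toAdd g.right.toAdd := rfl
      rw [hgmk, h0, hm]
      rfl
    set d := Nat.log p (2 * n + 1) + 1 with hd
    haveI : Fintype (GaloisField p d) := Fintype.ofFinite _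
    have hcardF : Nat.card (GaloisField p d) = p ^ d := GaloisField.card p d (by omega)
    have hcard : 2 * n + 1 < Fintype.card (GaloisField p d) := by
      rw [← Nat.card_eq_fintype_card, hcardF]
      exact Nat.lt_pow_succ_log_self hp.one_lt _
    obtain ⟨α, hα⟩ := lamp_exists_unit p (F := GaloisField p d) n hcard g.left.toAdd hf hleft
    refine ⟨(lampPermHom p α).ker, MonoidHom.normal_ker _, ?_, ?_, ?_⟩
    · intro hker
      rw [MonoidHom.mem_ker] at hker
      apply hα
      have h0 := Equiv.ext_iff.1 hker 0
      rw [lampPermHom_apply] at h0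
      simpa [hm] using h0
    · rw [Subgroup.index_ker]
      exact Nat.card_pos
    · rw [Subgroup.index_ker]
      have hple : p ^ d ≤ p * (2 * n + 1) := by
        rw [hd, pow_succ]
        calc p ^ Nat.log p (2 * n + 1) * p ≤ (2 * n + 1) * p :=
              Nat.mul_le_mul_right p (Nat.pow_log_le_self p (by omega))
          _ = p * (2 * n + 1) := mul_comm _ _
      calc Nat.card (lampPermHom p α).range
            ≤ Nat.card (GaloisField p d) * Nat.card (GaloisField p d) :=
            lampPermHom_card_range_le p α
        _ = p ^ d * p ^ d := by rw [hcardF]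
        _ ≤ (p * (2 * n + 1)) * (p * (2 * n + 1)) := Nat.mul_le_mul hple hple
        _ ≤ 4 * p ^ 2 * (n + 1) ^ 2 := by nlinarith [hp.two_le]
  · -- the shift is nontrivial; separate using the projection to ℤ/(n+1)
    haveI : NeZero (n + 1) := ⟨Nat.succ_ne_zero n⟩
    set ψ : Lamplighter p →* Multiplicative (ZMod (n + 1)) :=
      (AddMonoidHom.toMultiplicative (Int.castAddHom (ZMod (n + 1)))).comp
        SemidirectProduct.rightHom with hψ
    have hψg : ∀ h : Lamplighter p, ψ h = Multiplicative.ofAdd ((h.right.toAdd : ZMod (n + 1))) :=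
      fun h => rfl
    refine ⟨ψ.ker, MonoidHom.normal_ker _, ?_, ?_, ?_⟩
    · intro hker
      rw [MonoidHom.mem_ker, hψg] at hker
      have h0 : ((g.right.toAdd : ZMod (n + 1))) = 0 := congrArg Multiplicative.toAdd hker
      rw [ZMod.intCast_zmod_eq_zero_iff_dvd] at h0
      have hle := Int.le_of_dvd (abs_pos.mpr hm) ((dvd_abs _ _).mpr h0)
      have : ((n + 1 : ℕ) : ℤ) ≤ (n : ℤ) := le_trans hle hright
      omega
    · rw [Subgroup.index_ker]
      exact Nat.card_pos
    · rw [Subgroup.index_ker]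
      calc Nat.card ψ.range ≤ Nat.card (Multiplicative (ZMod (n + 1))) :=
            Nat.card_le_card_of_injective _ Subtype.val_injective
        _ = n + 1 := by rw [Nat.card_congr Multiplicative.toAdd, Nat.card_zmod]
        _ ≤ 4 * p ^ 2 * (n + 1) ^ 2 := by
            have h2 := hp.two_le
            calc n + 1 ≤ (n + 1) ^ 2 := by nlinarith
              _ ≤ 4 * p ^ 2 * (n + 1) ^ 2 := Nat.le_mul_of_pos_left _ (by positivity)
end

section
/- Fix a prime p and an integer d ≥ 1. The degree of the least common multiple of all nonzero polynomials in 𝔽_p[t] of degree at most d is at most 2·p^(d+1). -/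
open Polynomial

/-- `g` is a least common multiple (in the divisibility sense, hence well defined up to
units) of the set `P_d` of all nonzero polynomials in `𝔽_p[t]` of degree at most `d`. -/
def IsLcmOfDegLE (p d : ℕ) (g : Polynomial (ZMod p)) : Prop :=
  (∀ f : Polynomial (ZMod p), f ≠ 0 → f.natDegree ≤ d → f ∣ g) ∧
  (∀ h : Polynomial (ZMod p),
    (∀ f : Polynomial (ZMod p), f ≠ 0 → f.natDegree ≤ d → f ∣ h) → g ∣ h)

/-- Any irreducible polynomial over `𝔽_p` whose degree divides `m` divides `X^(p^m) - X`. -/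
lemma irred_dvd_X_pow_card_pow_sub_X {p : ℕ} [Fact p.Prime] {q : Polynomial (ZMod p)}
    (hq : Irreducible q) {m : ℕ} (hdvd : q.natDegree ∣ m) :
    q ∣ X ^ p ^ m - X := by
  haveI : Fact (Irreducible q) := ⟨hq⟩
  have hq0 : q ≠ 0 := hq.ne_zero
  set K := AdjoinRoot q
  haveI : FiniteDimensional (ZMod p) K := PowerBasis.finite (AdjoinRoot.powerBasis hq0)
  haveI : Finite K := Module.finite_of_finite (ZMod p)
  haveI : Fintype K := Fintype.ofFinite K
  have hcard : Fintype.card K = p ^ q.natDegree := by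
    have := Module.card_eq_pow_finrank (K := ZMod p) (V := K)
    rwa [ZMod.card, (AdjoinRoot.powerBasis hq0).finrank, AdjoinRoot.powerBasis_dim] at this
  obtain ⟨c, rfl⟩ := hdvd
  rw [← AdjoinRoot.mk_eq_zero]
  have : (AdjoinRoot.mk q) (X ^ p ^ (q.natDegree * c) - X) =
      (AdjoinRoot.root q) ^ p ^ (q.natDegree * c) - AdjoinRoot.root q := by
    simp
  rw [this, sub_eq_zero, pow_mul, ← hcard, FiniteField.pow_card_pow]

/-- Every nonzero polynomial of degree at most `d` divides `∏_{k=1}^d (X^(p^k) - X)`. -/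
lemma dvd_prod_aux {p : ℕ} [Fact p.Prime] (d : ℕ) :
    ∀ n : ℕ, ∀ f : Polynomial (ZMod p), f.natDegree ≤ n → f ≠ 0 → f.natDegree ≤ d →
      f ∣ ∏ k ∈ Finset.Icc 1 d, (X ^ p ^ k - X) := by
  intro n
  induction n with
  | zero =>
    intro f hn hf0 _
    have hfc : f = C (f.coeff 0) := Polynomial.eq_C_of_natDegree_le_zero hn
    have hc0 : f.coeff 0 ≠ 0 := fun h => hf0 (by rw [hfc, h, map_zero])
    rw [hfc]
    exact (Polynomial.isUnit_C.2 (isUnit_iff_ne_zero.2 hc0)).dvd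
  | succ n ih =>
    intro f hn hf0 hfd
    by_cases hu : IsUnit f
    · exact hu.dvd
    obtain ⟨q, hq, hqf⟩ := WfDvdMonoid.exists_irreducible_factor hu hf0
    obtain ⟨c, f', hndvd, rfl⟩ := WfDvdMonoid.max_power_factor hf0 hq
    have hr : 0 < q.natDegree := hq.natDegree_pos
    have hf'0 : f' ≠ 0 := by rintro rfl; simp at hf0
    have hc : 0 < c := by
      rcases Nat.eq_zero_or_pos c with rfl | h
      · exact absurd (by simpa using hqf) hndvd
      · exact h
    have hdeg : (q ^ c * f').natDegree = c * q.natDegree + f'.natDegree := by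
      rw [Polynomial.natDegree_mul (pow_ne_zero _ hq.ne_zero) hf'0, Polynomial.natDegree_pow]
    -- the prime power part divides the product
    have hcr : c * q.natDegree ≤ d := le_trans (by rw [hdeg]; exact Nat.le_add_right _ _) hfd
    have hqc : q ^ c ∣ ∏ k ∈ Finset.Icc 1 d, (X ^ p ^ k - X : Polynomial (ZMod p)) := by
      have hsub : (Finset.Icc 1 c).image (· * q.natDegree) ⊆ Finset.Icc 1 d := by
        intro x hx
        simp only [Finset.mem_image, Finset.mem_Icc] at hx ⊢
        obtain ⟨j, ⟨hj1, hjc⟩, rfl⟩ := hx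
        exact ⟨Nat.one_le_iff_ne_zero.2 (Nat.mul_ne_zero (by omega) (by omega)),
          le_trans (Nat.mul_le_mul_right _ hjc) hcr⟩
      have hinj : Set.InjOn (· * q.natDegree) (Finset.Icc 1 c) := fun a _ b _ hab =>
        Nat.eq_of_mul_eq_mul_right hr hab
      calc q ^ c = ∏ k ∈ (Finset.Icc 1 c).image (· * q.natDegree), q := by
            rw [Finset.prod_const, Finset.card_image_of_injOn hinj, Nat.card_Icc]
            simp
        _ ∣ ∏ k ∈ (Finset.Icc 1 c).image (· * q.natDegree), (X ^ p ^ k - X) := by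
            refine Finset.prod_dvd_prod_of_dvd _ _ fun k hk => ?_
            simp only [Finset.mem_image, Finset.mem_Icc] at hk
            obtain ⟨j, _, rfl⟩ := hk
            exact irred_dvd_X_pow_card_pow_sub_X hq ⟨j, (mul_comm _ _)⟩
        _ ∣ ∏ k ∈ Finset.Icc 1 d, (X ^ p ^ k - X) :=
            Finset.prod_dvd_prod_of_subset _ _ _ hsub
    -- the rest divides by induction
    rw [hdeg] at hn hfd
    have h1 : 1 ≤ c * q.natDegree := Nat.one_le_iff_ne_zero.2 (Nat.mul_ne_zero (by omega) (by omega))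
    have hf'deg : f'.natDegree ≤ n := by omega
    have hf'd : f'.natDegree ≤ d := by omega
    have hf'dvd := ih f' hf'deg hf'0 hf'd
    have hcop : IsCoprime (q ^ c) f' := by
      rcases EuclideanDomain.dvd_or_coprime q f' hq with h | h
      · exact absurd h hndvd
      · exact h.pow_left
    exact hcop.mul_dvd hqc hf'dvd

/-- **Upper bound in Lemma 3.4.** The degree of the least common multiple of all nonzero
polynomials in `𝔽_p[t]` of degree at most `d` is at most `2·p^(d+1)`. -/
theorem degree_lcm_le (p d : ℕ) (hp : p.Prime) (hd : 1 ≤ d)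
    (g : Polynomial (ZMod p)) (hg : IsLcmOfDegLE p d g) :
    g.natDegree ≤ 2 * p ^ (d + 1) := by
  haveI : Fact p.Prime := ⟨hp⟩
  set h : Polynomial (ZMod p) := ∏ k ∈ Finset.Icc 1 d, (X ^ p ^ k - X) with hh
  have hne : ∀ k ∈ Finset.Icc 1 d, (X ^ p ^ k - X : Polynomial (ZMod p)) ≠ 0 := by
    intro k hk
    simp only [Finset.mem_Icc] at hk
    exact FiniteField.X_pow_card_pow_sub_X_ne_zero _ (by omega) hp.one_lt
  have hgh : g ∣ h := hg.2 h fun f hf0 hfd => dvd_prod_aux d f.natDegree f le_rfl hf0 hfd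
  have hh0 : h ≠ 0 := Finset.prod_ne_zero_iff.2 hne
  have hdegh : h.natDegree = ∑ k ∈ Finset.Icc 1 d, p ^ k := by
    rw [hh, Polynomial.natDegree_prod _ _ hne]
    exact Finset.sum_congr rfl fun k hk => by
      simp only [Finset.mem_Icc] at hk
      exact FiniteField.X_pow_card_pow_sub_X_natDegree_eq _ (by omega) hp.one_lt
  have hle : g.natDegree ≤ h.natDegree := Polynomial.natDegree_le_of_dvd hgh hh0
  refine hle.trans ?_
  rw [hdegh]
  -- ∑_{k=1}^d p^k ≤ 2 p^(d+1)
  have key : ∀ m : ℕ, ∑ k ∈ Finset.Icc 1 m, p ^ k ≤ 2 * p ^ m := by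
    intro m
    induction m with
    | zero => simp
    | succ m ihm =>
      rw [Finset.sum_Icc_succ_top (by omega)]
      have h2 : 2 * p ^ m ≤ p ^ (m + 1) :=
        calc 2 * p ^ m ≤ p * p ^ m := Nat.mul_le_mul_right _ hp.two_le
          _ = p ^ (m + 1) := by ring
      calc (∑ k ∈ Finset.Icc 1 m, p ^ k) + p ^ (m + 1)
          ≤ 2 * p ^ m + p ^ (m + 1) := by omega
        _ ≤ p ^ (m + 1) + p ^ (m + 1) := by omega
        _ = 2 * p ^ (m + 1) := by ring
  exact (key d).trans (Nat.mul_le_mul_left _ (Nat.pow_le_pow_right hp.pos (by omega)))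
end

section
/- Fix a prime p and an integer d ≥ 1, and set s = ⌊√(p^d)⌋. Then the polynomial q_d(t) = LCM(P_d) · ∏_{i=1}^{s} (1 − t^i) ∈ 𝔽_p[t] has degree at most 3·p^(d+1); in particular there is a constant C > 0 independent of d with deg(q_d) ≤ C·p^d. -/
open Polynomial

section Aux

open Finset UniqueFactorizationMonoid

private lemma aux_two_mul_le_two_pow (m : ℕ) : 2 * m ≤ 2 ^ m := by
  induction m with
  | zero => simp
  | succ n ih =>
    rcases Nat.eq_zero_or_pos n with rfl | hn
    · simp
    · have h1 : 2 ≤ 2 ^ n := by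
        calc 2 = 2 * 1 := by ring
        _ ≤ 2 * n := by omega
        _ ≤ 2 ^ n := ih
      calc 2 * (n + 1) = 2 * n + 2 := by ring
      _ ≤ 2 ^ n + 2 ^ n := by omega
      _ = 2 ^ (n + 1) := by ring

private lemma aux_geom_sum_le {p : ℕ} (hp : 2 ≤ p) (m : ℕ) :
    ∑ e ∈ Icc 1 m, p ^ e ≤ 2 * p ^ m := by
  induction m with
  | zero => simp
  | succ n ih =>
    rw [Finset.sum_Icc_succ_top (by omega)]
    have h1 : 2 * p ^ n ≤ p ^ (n + 1) := by
      rw [pow_succ, mul_comm (p ^ n) p]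
      exact Nat.mul_le_mul_right _ hp
    omega

private lemma aux_swap {p : ℕ} (d : ℕ) :
    ∑ e ∈ Icc 1 d, (d / e) * p ^ e = ∑ k ∈ Icc 1 d, ∑ e ∈ Icc 1 (d / k), p ^ e := by
  have h1 : ∀ e ∈ Icc 1 d, (d / e) * p ^ e = ∑ k ∈ Icc 1 (d / e), p ^ e := by
    intro e he
    simp [Finset.sum_const, Nat.card_Icc]
  rw [Finset.sum_congr rfl h1]
  refine Finset.sum_comm' ?_
  intro e k
  simp only [Finset.mem_Icc]
  constructor
  · rintro ⟨⟨he1, hed⟩, hk1, hk2⟩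
    have h : k * e ≤ d := (Nat.le_div_iff_mul_le (by omega)).mp hk2
    have hek : e * k ≤ d := by rw [mul_comm]; exact h
    have hkd : k ≤ d := le_trans (Nat.le_mul_of_pos_right k (by omega)) h
    exact ⟨⟨he1, (Nat.le_div_iff_mul_le (by omega)).mpr hek⟩, hk1, hkd⟩
  · rintro ⟨⟨he1, hedk⟩, hk1, hkd⟩
    have hek : e * k ≤ d := (Nat.le_div_iff_mul_le (by omega)).mp hedk
    have h : k * e ≤ d := by rw [mul_comm]; exact hek
    have hed : e ≤ d := le_trans (Nat.le_mul_of_pos_right e (by omega)) hek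
    exact ⟨⟨he1, hed⟩, hk1, (Nat.le_div_iff_mul_le (by omega)).mpr h⟩

private lemma aux_arith {p : ℕ} (hp : 2 ≤ p) (d : ℕ) :
    ∑ e ∈ Icc 1 d, (d / e) * p ^ e ≤ 4 * p ^ d := by
  rcases Nat.eq_zero_or_pos d with rfl | hd
  · simp
  rw [aux_swap]
  have step1 : ∑ k ∈ Icc 1 d, ∑ e ∈ Icc 1 (d / k), p ^ e
      ≤ ∑ k ∈ Icc 1 d, 2 * p ^ (d / k) :=
    Finset.sum_le_sum fun k _ => aux_geom_sum_le hp (d / k)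
  have hsplit : Icc 1 d = insert 1 (Icc 2 d) := by
    ext x; simp [Finset.mem_Icc, Finset.mem_insert]; omega
  have step2 : ∑ k ∈ Icc 1 d, 2 * p ^ (d / k)
      = 2 * p ^ d + ∑ k ∈ Icc 2 d, 2 * p ^ (d / k) := by
    rw [hsplit, Finset.sum_insert (by simp)]
    simp
  have hd2 : ∀ k ∈ Icc 2 d, 2 * p ^ (d / k) ≤ 2 * p ^ (d / 2) := by
    intro k hk
    simp only [Finset.mem_Icc] at hk
    exact Nat.mul_le_mul_left _
      (Nat.pow_le_pow_right (by omega) (Nat.div_le_div_left hk.1 (by omega)))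
  have step3 : ∑ k ∈ Icc 2 d, 2 * p ^ (d / k) ≤ (d - 1) * (2 * p ^ (d / 2)) := by
    calc ∑ k ∈ Icc 2 d, 2 * p ^ (d / k) ≤ ∑ k ∈ Icc 2 d, 2 * p ^ (d / 2) :=
      Finset.sum_le_sum hd2
    _ = (d - 1) * (2 * p ^ (d / 2)) := by
      rw [Finset.sum_const, Nat.card_Icc, smul_eq_mul]
      congr 1
  have hdle : d ≤ p ^ (d - d / 2) := by
    calc d ≤ 2 * (d - d / 2) := by omega
    _ ≤ 2 ^ (d - d / 2) := aux_two_mul_le_two_pow _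
    _ ≤ p ^ (d - d / 2) := Nat.pow_le_pow_left hp _
  have step4 : (d - 1) * p ^ (d / 2) ≤ p ^ d := by
    calc (d - 1) * p ^ (d / 2) ≤ p ^ (d - d / 2) * p ^ (d / 2) :=
      Nat.mul_le_mul_right _ (by omega)
    _ = p ^ d := by rw [← pow_add]; congr 1; omega
  calc ∑ k ∈ Icc 1 d, ∑ e ∈ Icc 1 (d / k), p ^ e
      ≤ 2 * p ^ d + ∑ k ∈ Icc 2 d, 2 * p ^ (d / k) := by rw [← step2]; exact step1
  _ ≤ 2 * p ^ d + (d - 1) * (2 * p ^ (d / 2)) := Nat.add_le_add_left step3 _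
  _ = 2 * p ^ d + 2 * ((d - 1) * p ^ (d / 2)) := by ring
  _ ≤ 2 * p ^ d + 2 * p ^ d := Nat.add_le_add_left (Nat.mul_le_mul_left _ step4) _
  _ = 4 * p ^ d := by ring

private lemma aux_monic_irred_dvd (p : ℕ) [Fact p.Prime] {π : Polynomial (ZMod p)}
    (hi : Irreducible π) (hm : π.Monic) :
    π ∣ X ^ p ^ π.natDegree - X := by
  haveI := Fact.mk hi
  have hπ0 : π ≠ 0 := hi.ne_zero
  let pb := AdjoinRoot.powerBasis hπ0
  haveI : Module.Finite (ZMod p) (AdjoinRoot π) := pb.finite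
  haveI : Fintype (AdjoinRoot π) := Module.fintypeOfFintype pb.basis
  have hfr : Module.finrank (ZMod p) (AdjoinRoot π) = π.natDegree := by
    rw [pb.finrank]
    rfl
  have hcard : Fintype.card (AdjoinRoot π) = p ^ π.natDegree := by
    rw [Module.card_eq_pow_finrank (K := ZMod p), ZMod.card, hfr]
  have hroot : (AdjoinRoot.root π) ^ p ^ π.natDegree = AdjoinRoot.root π := by
    rw [← hcard]
    exact FiniteField.pow_card _
  have h0 : aeval (AdjoinRoot.root π) ((X : Polynomial (ZMod p)) ^ p ^ π.natDegree - X) = 0 := by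
    simp [hroot]
  have hdvd := minpoly.dvd (ZMod p) (AdjoinRoot.root π) h0
  rwa [AdjoinRoot.minpoly_root hπ0, hm.leadingCoeff, inv_one, map_one, mul_one] at hdvd

private lemma aux_base_ne_zero (p : ℕ) [Fact p.Prime] {e : ℕ} (he : 1 ≤ e) :
    ((X : Polynomial (ZMod p)) ^ p ^ e - X) ≠ 0 :=
  FiniteField.X_pow_card_sub_X_ne_zero _
    (Nat.one_lt_pow (by omega) (Fact.out : p.Prime).one_lt)

private lemma aux_dvd_H (p d : ℕ) [Fact p.Prime] {f : Polynomial (ZMod p)}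
    (hf0 : f ≠ 0) (hfd : f.natDegree ≤ d) :
    f ∣ ∏ e ∈ Icc 1 d, ((X : Polynomial (ZMod p)) ^ p ^ e - X) ^ (d / e) := by
  classical
  set H := ∏ e ∈ Icc 1 d, ((X : Polynomial (ZMod p)) ^ p ^ e - X) ^ (d / e) with hHdef
  have hfac0 : ∀ e ∈ Icc 1 d, ((X : Polynomial (ZMod p)) ^ p ^ e - X) ^ (d / e) ≠ 0 := by
    intro e he
    simp only [Finset.mem_Icc] at he
    exact pow_ne_zero _ (aux_base_ne_zero p he.1)
  have hH0 : H ≠ 0 := Finset.prod_ne_zero_iff.mpr hfac0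
  rw [dvd_iff_normalizedFactors_le_normalizedFactors hf0 hH0, Multiset.le_iff_count]
  intro π
  by_cases hπ : π ∈ normalizedFactors f
  · have hirr : Irreducible π := irreducible_of_normalized_factor _ hπ
    have hπ0 : π ≠ 0 := hirr.ne_zero
    have hnorm : normalize π = π := normalize_normalized_factor _ hπ
    have hm : π.Monic := by rw [← hnorm]; exact monic_normalize hπ0
    set e := π.natDegree with he_def
    have he1 : 1 ≤ e := hirr.natDegree_pos
    have hπf : π ∣ f := dvd_of_mem_normalizedFactors hπ
    have heD : e ≤ d := le_trans (natDegree_le_of_dvd hπf hf0) hfd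
    set a := Multiset.count π (normalizedFactors f) with ha_def
    have hpow : π ^ a ∣ f := by
      have hle : Multiset.replicate a π ≤ normalizedFactors f :=
        Multiset.le_count_iff_replicate_le.mp le_rfl
      have := Multiset.prod_dvd_prod_of_le hle
      rw [Multiset.prod_replicate] at this
      exact this.trans (prod_normalizedFactors hf0).dvd
    have hae : a * e ≤ d := by
      have h1 : (π ^ a).natDegree ≤ f.natDegree := natDegree_le_of_dvd hpow hf0
      rw [natDegree_pow] at h1
      simp only [← he_def] at h1
      omega
    have haDe : a ≤ d / e := (Nat.le_div_iff_mul_le (by omega)).mpr hae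
    have hbase : π ∈ normalizedFactors ((X : Polynomial (ZMod p)) ^ p ^ e - X) := by
      obtain ⟨q, hq, hassoc⟩ := exists_mem_normalizedFactors_of_dvd (aux_base_ne_zero p he1)
        hirr (aux_monic_irred_dvd p hirr hm)
      have : π = q := by
        rw [← hnorm, ← normalize_normalized_factor _ hq]
        exact normalize_eq_normalize hassoc.dvd hassoc.symm.dvd
      rwa [this]
    have hdvdfac : ((X : Polynomial (ZMod p)) ^ p ^ e - X) ^ (d / e) ∣ H :=
      Finset.dvd_prod_of_mem _ (Finset.mem_Icc.mpr ⟨he1, heD⟩)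
    have hcount : d / e ≤ Multiset.count π (normalizedFactors H) := by
      have hle : normalizedFactors (((X : Polynomial (ZMod p)) ^ p ^ e - X) ^ (d / e))
          ≤ normalizedFactors H :=
        (dvd_iff_normalizedFactors_le_normalizedFactors
          (pow_ne_zero _ (aux_base_ne_zero p he1)) hH0).mp hdvdfac
      have h1 : Multiset.count π
            (normalizedFactors (((X : Polynomial (ZMod p)) ^ p ^ e - X) ^ (d / e)))
          = (d / e) * Multiset.count π
            (normalizedFactors ((X : Polynomial (ZMod p)) ^ p ^ e - X)) := by
        rw [normalizedFactors_pow, Multiset.count_nsmul]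
      have h2 : 1 ≤ Multiset.count π
          (normalizedFactors ((X : Polynomial (ZMod p)) ^ p ^ e - X)) :=
        Multiset.one_le_count_iff_mem.mpr hbase
      have := Multiset.count_le_of_le π hle
      calc d / e = d / e * 1 := by ring
      _ ≤ d / e * Multiset.count π
            (normalizedFactors ((X : Polynomial (ZMod p)) ^ p ^ e - X)) :=
          Nat.mul_le_mul_left _ h2
      _ ≤ Multiset.count π (normalizedFactors H) := by omega
    omega
  · rw [Multiset.count_eq_zero_of_notMem hπ]
    omega

private lemma aux_main (p : ℕ) (hp : p.Prime) (d : ℕ) (hd : 1 ≤ d)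
    (g : Polynomial (ZMod p))
    (hg1 : ∀ h : Polynomial (ZMod p),
      (∀ f : Polynomial (ZMod p), f ≠ 0 → f.natDegree ≤ d → f ∣ h) → g ∣ h) :
    (g * ∏ i ∈ Finset.Icc 1 (Nat.sqrt (p ^ d)),
        (1 - (X : Polynomial (ZMod p)) ^ i)).natDegree ≤ 3 * p ^ (d + 1) := by
  haveI := Fact.mk hp
  have hp2 : 2 ≤ p := hp.two_le
  classical
  set s := Nat.sqrt (p ^ d) with hs_def
  set H := ∏ e ∈ Icc 1 d, ((X : Polynomial (ZMod p)) ^ p ^ e - X) ^ (d / e) with hHdef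
  have hfac0 : ∀ e ∈ Icc 1 d, ((X : Polynomial (ZMod p)) ^ p ^ e - X) ^ (d / e) ≠ 0 := by
    intro e he
    simp only [Finset.mem_Icc] at he
    exact pow_ne_zero _ (aux_base_ne_zero p he.1)
  have hH0 : H ≠ 0 := Finset.prod_ne_zero_iff.mpr hfac0
  have hgH : g ∣ H := hg1 H (fun f h1 h2 => aux_dvd_H p d h1 h2)
  have hg0 : g ≠ 0 := by
    intro h
    rw [h, zero_dvd_iff] at hgH
    exact hH0 hgH
  have hdegH : H.natDegree = ∑ e ∈ Icc 1 d, (d / e) * p ^ e := by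
    rw [natDegree_prod _ _ hfac0]
    refine Finset.sum_congr rfl fun e he => ?_
    simp only [Finset.mem_Icc] at he
    rw [natDegree_pow,
      FiniteField.X_pow_card_sub_X_natDegree_eq _ (Nat.one_lt_pow (by omega) hp.one_lt)]
  have hdegg : g.natDegree ≤ 4 * p ^ d := by
    calc g.natDegree ≤ H.natDegree := natDegree_le_of_dvd hgH hH0
    _ = ∑ e ∈ Icc 1 d, (d / e) * p ^ e := hdegH
    _ ≤ 4 * p ^ d := aux_arith hp2 d
  -- the product part
  have hPdeg : ∀ i ∈ Icc 1 s, (1 - (X : Polynomial (ZMod p)) ^ i).natDegree = i := by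
    intro i hi
    have h : (1 - (X : Polynomial (ZMod p)) ^ i) = -(X ^ i - C 1) := by
      rw [C_1]; ring
    rw [h, natDegree_neg, natDegree_X_pow_sub_C]
  have hPfac0 : ∀ i ∈ Icc 1 s, (1 - (X : Polynomial (ZMod p)) ^ i) ≠ 0 := by
    intro i hi
    simp only [Finset.mem_Icc] at hi
    have := hPdeg i (Finset.mem_Icc.mpr hi)
    intro h0
    rw [h0] at this
    simp at this
    omega
  set P := ∏ i ∈ Icc 1 s, (1 - (X : Polynomial (ZMod p)) ^ i) with hPdef
  have hP0 : P ≠ 0 := Finset.prod_ne_zero_iff.mpr hPfac0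
  have hdegP : P.natDegree ≤ p ^ d := by
    rw [hPdef, natDegree_prod _ _ hPfac0]
    calc ∑ i ∈ Icc 1 s, (1 - (X : Polynomial (ZMod p)) ^ i).natDegree
        = ∑ i ∈ Icc 1 s, i := Finset.sum_congr rfl hPdeg
    _ ≤ ∑ i ∈ Icc 1 s, s := Finset.sum_le_sum fun i hi => (Finset.mem_Icc.mp hi).2
    _ = s * s := by rw [Finset.sum_const, Nat.card_Icc, smul_eq_mul]; congr 1
    _ ≤ p ^ d := Nat.sqrt_le (p ^ d)
  rw [natDegree_mul hg0 hP0]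
  have hfinal : 5 * p ^ d ≤ 3 * p ^ (d + 1) := by
    rw [pow_succ]
    calc 5 * p ^ d ≤ 6 * p ^ d := by omega
    _ = 3 * (p ^ d * 2) := by ring
    _ ≤ 3 * (p ^ d * p) := by
      exact Nat.mul_le_mul_left _ (Nat.mul_le_mul_left _ hp2)
  omega

end Aux

/-- **Lemma 3.5.** With `s = ⌊√(p^d)⌋`, the polynomial
`q_d(t) = LCM(P_d) · ∏_{i=1}^{s} (1 − t^i)` has degree at most `3·p^(d+1)`; in particular
there is a constant `C > 0` independent of `d` with `deg(q_d) ≤ C·p^d`. -/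
theorem degree_lcm_mul_prod_le (p : ℕ) (hp : p.Prime) (d : ℕ) (hd : 1 ≤ d)
    (g : Polynomial (ZMod p)) (hg : IsLcmOfDegLE p d g) :
    (g * ∏ i ∈ Finset.Icc 1 (Nat.sqrt (p ^ d)),
        (1 - (X : Polynomial (ZMod p)) ^ i)).natDegree ≤ 3 * p ^ (d + 1) ∧
    ∃ C : ℝ, 0 < C ∧ ∀ d' : ℕ, 1 ≤ d' → ∀ g' : Polynomial (ZMod p), IsLcmOfDegLE p d' g' →
      ((g' * ∏ i ∈ Finset.Icc 1 (Nat.sqrt (p ^ d')),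
          (1 - (X : Polynomial (ZMod p)) ^ i)).natDegree : ℝ) ≤ C * (p : ℝ) ^ d' := by
  constructor
  · exact aux_main p hp d hd g hg.2
  · have hppos : (0 : ℝ) < p := by exact_mod_cast hp.pos
    refine ⟨3 * p, by linarith, ?_⟩
    intro d' hd' g' hg'
    have h := aux_main p hp d' hd' g' hg'.2
    calc ((g' * ∏ i ∈ Finset.Icc 1 (Nat.sqrt (p ^ d')),
          (1 - (X : Polynomial (ZMod p)) ^ i)).natDegree : ℝ)
        ≤ ((3 * p ^ (d' + 1) : ℕ) : ℝ) := Nat.cast_le.mpr h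
    _ = 3 * (p : ℝ) * (p : ℝ) ^ d' := by push_cast; ring
end

section
/- For every prime p ≥ 3 and every integer r ≥ 1, the inequality r · Σ_{i=1}^{r} (p^i / i) ≤ 2·p^r holds (as an inequality of rational numbers). -/
private lemma sum_pow_div_le_aux (p : ℕ) (hp3 : 3 ≤ p) :
    ∀ r : ℕ, 2 ≤ r →
    (r : ℚ) * ∑ i ∈ Finset.Icc 1 r, (p : ℚ) ^ i / (i : ℚ) ≤ 2 * (p : ℚ) ^ r := by
  have hpq : (3:ℚ) ≤ (p:ℚ) := by exact_mod_cast hp3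
  intro r hr
  induction r, hr using Nat.le_induction with
  | base =>
      have : Finset.Icc 1 2 = {1, 2} := rfl
      rw [this, Finset.sum_insert (by decide), Finset.sum_singleton]
      push_cast
      nlinarith [sq_nonneg ((p:ℚ) - 2)]
  | succ r hr ih =>
      have hr1 : (1:ℚ) ≤ (r:ℚ) := by exact_mod_cast hr.trans' (by norm_num)
      have hr2 : (2:ℚ) ≤ (r:ℚ) := by exact_mod_cast hr
      have hpow : (0:ℚ) < (p:ℚ) ^ r := by positivity
      have hS : (0:ℚ) ≤ ∑ i ∈ Finset.Icc 1 r, (p : ℚ) ^ i / (i : ℚ) := by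
        apply Finset.sum_nonneg
        intro i hi
        have : (0:ℚ) ≤ (i:ℚ) := by positivity
        positivity
      rw [Finset.sum_Icc_succ_top (by omega : 1 ≤ r + 1)]
      set S := ∑ i ∈ Finset.Icc 1 r, (p : ℚ) ^ i / (i : ℚ) with hSdef
      have hr10 : ((r:ℚ) + 1) ≠ 0 := by positivity
      push_cast
      have key : ((r:ℚ) + 1) * ((p:ℚ) ^ (r+1) / ((r:ℚ) + 1)) = (p:ℚ) ^ (r+1) := by
        field_simp
      rw [mul_add, key]
      -- need (r+1) * S ≤ p^(r+1)
      have hSle : S ≤ (p:ℚ) ^ r := by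
        nlinarith
      have h3 : ((r:ℚ) + 1) * S ≤ 3 * (p:ℚ) ^ r := by nlinarith
      have : (3:ℚ) * (p:ℚ) ^ r ≤ (p:ℚ) ^ (r+1) := by
        rw [pow_succ]
        nlinarith
      nlinarith

/-- For every prime `p ≥ 3` and every integer `r ≥ 1`, one has
`r · Σ_{i=1}^{r} p^i/i ≤ 2·p^r` as rational numbers. -/
theorem sum_pow_div_le (p : ℕ) (hp : p.Prime) (hp3 : 3 ≤ p) (r : ℕ) (hr : 1 ≤ r) :
    (r : ℚ) * ∑ i ∈ Finset.Icc 1 r, (p : ℚ) ^ i / (i : ℚ) ≤ 2 * (p : ℚ) ^ r := by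
  have hpq : (3:ℚ) ≤ (p:ℚ) := by exact_mod_cast hp3
  rcases eq_or_lt_of_le hr with h1 | h2
  · subst h1
    simp
    nlinarith
  · exact sum_pow_div_le_aux p hp3 r (by omega)
end

section
/- Fix a prime p. Let α(t) ∈ 𝔽_p[t] be a polynomial of degree e ≥ 1 with nonzero constant term. Then the quotient ring 𝔽_p[t,t⁻¹]/(α), where (α) is the ideal of the Laurent polynomial ring 𝔽_p[t,t⁻¹] generated by α(t), is finite of cardinality p^e. Equivalently, the ideal (α) has index p^e as an additive subgroup of 𝔽_p[t,t⁻¹]. -/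
open Polynomial LaurentPolynomial

/-- Let `α(t) ∈ 𝔽_p[t]` have degree `e ≥ 1` and nonzero constant term. Then the quotient of
the Laurent polynomial ring `𝔽_p[t,t⁻¹]` by the ideal generated by `α(t)` is finite of
cardinality `p^e`; equivalently, that ideal has index `p^e` as an additive subgroup of
`𝔽_p[t,t⁻¹]`. -/
theorem laurentPolynomial_quotient_card (p : ℕ) (hp : p.Prime)
    (α : Polynomial (ZMod p)) (he : 1 ≤ α.natDegree) (h0 : α.coeff 0 ≠ 0) :
    Nat.card
        (LaurentPolynomial (ZMod p) ⧸
          (Ideal.span {Polynomial.toLaurent α} : Ideal (LaurentPolynomial (ZMod p)))) =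
      p ^ α.natDegree ∧
    (Ideal.span {Polynomial.toLaurent α} :
        Ideal (LaurentPolynomial (ZMod p))).toAddSubgroup.index = p ^ α.natDegree := by
  classical
  haveI : Fact p.Prime := ⟨hp⟩
  set K := ZMod p with hK
  set I : Ideal (LaurentPolynomial K) := Ideal.span {Polynomial.toLaurent α} with hI
  have hα0 : α ≠ 0 := fun h => h0 (by simp [h])
  -- X becomes a unit in AdjoinRoot α
  have hpoly : X * (α.divX * Polynomial.C (-(α.coeff 0)⁻¹)) =
      α * Polynomial.C (-(α.coeff 0)⁻¹) + 1 := by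
    have h2 : X * α.divX = α - Polynomial.C (α.coeff 0) := by
      have := Polynomial.X_mul_divX_add α
      linear_combination this
    rw [← mul_assoc, h2, sub_mul]
    have : Polynomial.C (α.coeff 0) * Polynomial.C (-(α.coeff 0)⁻¹) = -1 := by
      rw [← Polynomial.C_mul, mul_neg, mul_inv_cancel₀ h0]
      simp
    rw [this]; ring
  have hXunit : IsUnit (AdjoinRoot.mk α X) := by
    refine IsUnit.of_mul_eq_one (a := _)
      (AdjoinRoot.mk α (α.divX * Polynomial.C (-(α.coeff 0)⁻¹))) ?_
    rw [← map_mul, hpoly, map_add, map_mul, AdjoinRoot.mk_self, zero_mul, zero_add, map_one]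
  have hunits : ∀ y : Submonoid.powers (X : K[X]), IsUnit (AdjoinRoot.mk α y) := by
    rintro ⟨y, n, rfl⟩
    simpa using hXunit.pow n
  haveI := LaurentPolynomial.isLocalization (R := K)
  have hmkα : (Ideal.Quotient.mk I) (Polynomial.toLaurent α) = 0 :=
    Ideal.Quotient.eq_zero_iff_mem.mpr (Ideal.subset_span rfl)
  -- f : AdjoinRoot α →+* Laurent ⧸ I
  have hf0 : ∀ a ∈ Ideal.span ({α} : Set K[X]),
      (Ideal.Quotient.mk I).comp (Polynomial.toLaurent (R := K)) a = 0 := by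
    intro a ha
    obtain ⟨c, rfl⟩ := Ideal.mem_span_singleton.mp ha
    simp only [RingHom.comp_apply, map_mul, hmkα, zero_mul]
  let f : AdjoinRoot α →+* LaurentPolynomial K ⧸ I :=
    Ideal.Quotient.lift _ ((Ideal.Quotient.mk I).comp (Polynomial.toLaurent (R := K))) hf0
  -- g : Laurent ⧸ I →+* AdjoinRoot α
  let g0 : LaurentPolynomial K →+* AdjoinRoot α :=
    IsLocalization.lift (M := Submonoid.powers (X : K[X])) hunits
  have hg0 : ∀ x : K[X], g0 (Polynomial.toLaurent x) = AdjoinRoot.mk α x := by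
    intro x
    rw [← LaurentPolynomial.algebraMap_eq_toLaurent]
    exact IsLocalization.lift_eq hunits x
  have hg0I : ∀ a ∈ I, g0 a = 0 := by
    intro a ha
    obtain ⟨c, rfl⟩ := Ideal.mem_span_singleton.mp ha
    rw [map_mul, hg0, AdjoinRoot.mk_self, zero_mul]
  let g : LaurentPolynomial K ⧸ I →+* AdjoinRoot α := Ideal.Quotient.lift _ g0 hg0I
  -- g ∘ f = id
  have hgf : ∀ x, g (f x) = x := by
    intro x
    obtain ⟨x, rfl⟩ := Ideal.Quotient.mk_surjective x
    show g ((Ideal.Quotient.mk I) (Polynomial.toLaurent x)) = _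
    show g0 (Polynomial.toLaurent x) = _
    exact hg0 x
  -- f ∘ g = id
  have hfg : ∀ y, f (g y) = y := by
    intro y
    obtain ⟨z, rfl⟩ := Ideal.Quotient.mk_surjective y
    show f (g0 z) = Ideal.Quotient.mk I z
    have : (f.comp g0) = Ideal.Quotient.mk I := by
      apply IsLocalization.ringHom_ext (M := Submonoid.powers (X : K[X]))
      apply RingHom.ext
      intro x
      simp only [RingHom.comp_apply, LaurentPolynomial.algebraMap_eq_toLaurent, hg0]
      rfl
    exact congrFun (congrArg (fun h => h.toFun) this) z
  have hbij : Function.Bijective f :=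
    ⟨Function.LeftInverse.injective hgf, Function.RightInverse.surjective hfg⟩
  have hcard1 : Nat.card (AdjoinRoot α) = Nat.card (LaurentPolynomial K ⧸ I) :=
    Nat.card_eq_of_bijective f hbij
  have hcard2 : Nat.card (AdjoinRoot α) = p ^ α.natDegree := by
    have b : Module.Basis (Fin α.natDegree) K (AdjoinRoot α) := AdjoinRoot.powerBasisAux hα0
    rw [Nat.card_congr b.equivFun.toEquiv]
    simp [Nat.card_fun, Nat.card_eq_fintype_card, hK, ZMod.card]
  have h1 : Nat.card (LaurentPolynomial K ⧸ I) = p ^ α.natDegree := by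
    rw [← hcard1, hcard2]
  exact ⟨h1, h1⟩
end
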